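/- arXiv:2402.15716 — 2 statements merged into one kernel-verified Lean document; each statement's English description precedes it below -/
import Mathlib

section
/- Let C be a finite-dimensional vector space over a field, graded by the integers, and let d₀, d₁ : C → C be linear maps such that d₀ is homogeneous of degree 0, d₁ is homogeneous of degree −2 with respect to the grading, and (d₀ + d₁)² = 0. Then d₀² = 0 and dim H(C, d₀ + d₁) ≤ dim H(C, d₀), where H(C, d) = ker d / im d. -/
/-!
If `d = d₀ + d₁` with `d² = 0`, then `dim H(d) = 2 dim ker d - dim V`, so it suffices to show
`dim ker (d₀ + d₁) ≤ dim ker d₀`. Choose in each degree `n` a complement `Wₙ` of `ker d₀ ∩ ℱₙ`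
in `ℱₙ`. For `0 ≠ x ∈ ⨁ Wₙ`, the top-degree component of `(d₀ + d₁) x` is `d₀` of the top-degree
component of `x`, which is nonzero; hence `⨁ Wₙ`, a complement of `ker d₀`, meets
`ker (d₀ + d₁)` trivially. The same top-degree argument applied to `(d₀ + d₁)² x` for homogeneous
`x` gives `d₀² = 0`.
-/

open Module LinearMap

section Graded

variable {ι R V : Type*} [Preorder ι] [Ring R] [AddCommGroup V] [Module R V]

def gradedBelow (ℱ : ι → Submodule R V) (n : ι) : Submodule R V :=
  ⨆ j ∈ Set.Iio n, ℱ j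

def PreservesGrading (ℱ : ι → Submodule R V) (f : V →ₗ[R] V) : Prop :=
  ∀ n, ∀ x ∈ ℱ n, f x ∈ ℱ n

def LowersGrading (ℱ : ι → Submodule R V) (f : V →ₗ[R] V) : Prop :=
  ∀ n, ∀ x ∈ ℱ n, f x ∈ gradedBelow ℱ n

variable {ℱ : ι → Submodule R V}

lemma le_gradedBelow {i n : ι} (h : i < n) : ℱ i ≤ gradedBelow ℱ n :=
  le_biSup ℱ (Set.mem_Iio.mpr h)

lemma gradedBelow_mono {m n : ι} (h : m ≤ n) : gradedBelow ℱ m ≤ gradedBelow ℱ n :=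
  biSup_mono fun _ hj => lt_of_lt_of_le hj h

lemma gradedBelow_le_comap {f : V →ₗ[R] V} {n : ι}
    (hf : ∀ i < n, ∀ x ∈ ℱ i, f x ∈ gradedBelow ℱ n) :
    gradedBelow ℱ n ≤ (gradedBelow ℱ n).comap f :=
  iSup₂_le fun i hi x hx => hf i hi x hx

lemma PreservesGrading.mapsTo_gradedBelow {f : V →ₗ[R] V} (hf : PreservesGrading ℱ f)
    {n : ι} {x : V} (hx : x ∈ gradedBelow ℱ n) : f x ∈ gradedBelow ℱ n :=
  gradedBelow_le_comap (fun i hi y hy => le_gradedBelow hi (hf i y hy)) hx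

lemma LowersGrading.mapsTo_gradedBelow {f : V →ₗ[R] V} (hf : LowersGrading ℱ f)
    {n : ι} {x : V} (hx : x ∈ gradedBelow ℱ n) : f x ∈ gradedBelow ℱ n :=
  gradedBelow_le_comap (fun i hi y hy => gradedBelow_mono hi.le (hf i y hy)) hx

lemma LowersGrading.zero : LowersGrading ℱ (0 : V →ₗ[R] V) :=
  fun _ _ _ => zero_mem _

lemma eq_zero_of_add_mem_gradedBelow (hℱ : iSupIndep ℱ) {n : ι} {x y : V}
    (hx : x ∈ ℱ n) (hy : y ∈ gradedBelow ℱ n) (h : x + y = 0) : x = 0 := by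
  have hdisj : Disjoint (ℱ n) (gradedBelow ℱ n) :=
    hℱ.disjoint_biSup Set.self_notMem_Iio
  rw [add_eq_zero_iff_eq_neg] at h
  exact Submodule.disjoint_def.mp hdisj x hx (h ▸ neg_mem hy)

variable {d₀ d₁ : V →ₗ[R] V}

lemma PreservesGrading.comp_self_eq_zero [DecidableEq ι] (hgr : DirectSum.IsInternal ℱ)
    (h₀ : PreservesGrading ℱ d₀) (h₁ : LowersGrading ℱ d₁)
    (hd : (d₀ + d₁) ∘ₗ (d₀ + d₁) = 0) : d₀ ∘ₗ d₀ = 0 := by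
  rw [← LinearMap.ker_eq_top, eq_top_iff, ← hgr.submodule_iSup_eq_top]
  refine iSup_le fun n x hx => ?_
  have hlower : ∀ y ∈ gradedBelow ℱ n, (d₀ + d₁) y ∈ gradedBelow ℱ n := fun y hy =>
    add_mem (h₀.mapsTo_gradedBelow hy) (h₁.mapsTo_gradedBelow hy)
  have hsplit : d₀ (d₀ x) + (d₁ (d₀ x) + (d₀ + d₁) (d₁ x)) = 0 :=
    calc _ = (d₀ + d₁) ((d₀ + d₁) x) := by simp only [LinearMap.add_apply, map_add]; abel
      _ = 0 := LinearMap.congr_fun hd x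
  exact eq_zero_of_add_mem_gradedBelow hgr.submodule_iSupIndep (h₀ n _ (h₀ n x hx))
    (add_mem (h₁ n _ (h₀ n x hx)) (hlower _ (h₁ n x hx))) hsplit

end Graded

section LeadingTerm

variable {ι R V : Type*} [LinearOrder ι] [Ring R] [AddCommGroup V] [Module R V]
  {ℱ : ι → Submodule R V} {d₀ d₁ : V →ₗ[R] V}

lemma disjoint_iSup_ker_add (hℱ : iSupIndep ℱ) (h₀ : PreservesGrading ℱ d₀)
    (h₁ : LowersGrading ℱ d₁) {W : ι → Submodule R V} (hWℱ : ∀ n, W n ≤ ℱ n)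
    (hW : ∀ n, Disjoint (W n) (ker d₀)) : Disjoint (⨆ n, W n) (ker (d₀ + d₁)) := by
  classical
  refine Submodule.disjoint_def.mpr fun x hx hker => ?_
  obtain ⟨s, hxs⟩ := Submodule.mem_iSup_iff_exists_finset.mp hx
  clear hx
  induction s using Finset.induction_on_max generalizing x with
  | empty => simpa using hxs
  | insert a s hlt ih =>
    rw [Finset.iSup_insert, Submodule.mem_sup] at hxs
    obtain ⟨y, hy, z, hz, rfl⟩ := hxs
    have hz_below : z ∈ gradedBelow ℱ a :=
      iSup₂_le (fun i hi => (hWℱ i).trans (le_gradedBelow (hlt i hi))) hz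
    have hy_lead : d₀ y + (d₁ y + (d₀ + d₁) z) = 0 := by
      rw [← LinearMap.mem_ker.mp hker]
      simp only [LinearMap.add_apply, map_add]
      abel
    have hy0 : y = 0 := Submodule.disjoint_def.mp (hW a) y hy <|
      eq_zero_of_add_mem_gradedBelow hℱ (h₀ a y (hWℱ a hy))
        (add_mem (h₁ a y (hWℱ a hy))
          (add_mem (h₀.mapsTo_gradedBelow hz_below) (h₁.mapsTo_gradedBelow hz_below)))
        hy_lead
    subst hy0
    rw [zero_add] at hker ⊢
    exact ih z hker hz

end LeadingTerm

section Rank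

variable {ι K V : Type*} [LinearOrder ι] [DivisionRing K] [AddCommGroup V] [Module K V]
  [FiniteDimensional K V]

lemma finrank_homology_add_finrank {d : V →ₗ[K] V} (hd : d ∘ₗ d = 0) :
    finrank K (ker d ⧸ (range d).comap (ker d).subtype) + finrank K V =
      2 * finrank K (ker d) := by
  have hrange : finrank K ((range d).comap (ker d).subtype) = finrank K (range d) :=
    (Submodule.comapSubtypeEquivOfLe (LinearMap.range_le_ker_iff.mpr hd)).finrank_eq
  have := Submodule.finrank_quotient_add_finrank ((range d).comap (ker d).subtype)
  have := d.finrank_range_add_finrank_ker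
  omega

lemma finrank_ker_add_le_finrank_ker {ℱ : ι → Submodule K V} {d₀ d₁ : V →ₗ[K] V}
    (hgr : DirectSum.IsInternal ℱ) (h₀ : PreservesGrading ℱ d₀) (h₁ : LowersGrading ℱ d₁) :
    finrank K (ker (d₀ + d₁)) ≤ finrank K (ker d₀) := by
  choose W hWdisj hWsup using fun n =>
    IsModularLattice.exists_disjoint_and_sup_eq (inf_le_right : ker d₀ ⊓ ℱ n ≤ ℱ n)
  have hWℱ : ∀ n, W n ≤ ℱ n := fun n => hWsup n ▸ le_sup_right
  have hWker : ∀ n, Disjoint (W n) (ker d₀) := fun n => Submodule.disjoint_def.mpr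
    fun x hxW hxker => Submodule.disjoint_def.mp (hWdisj n) x ⟨hxker, hWℱ n hxW⟩ hxW
  have hdisj₀ : Disjoint (⨆ n, W n) (ker d₀) := by
    simpa using disjoint_iSup_ker_add hgr.submodule_iSupIndep h₀ LowersGrading.zero hWℱ hWker
  have hcompl : IsCompl (⨆ n, W n) (ker d₀) := by
    refine ⟨hdisj₀, codisjoint_iff.mpr ?_⟩
    rw [eq_top_iff, ← hgr.submodule_iSup_eq_top]
    exact iSup_le fun n => hWsup n ▸
      sup_le (inf_le_left.trans le_sup_right) ((le_iSup W n).trans le_sup_left)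
  have := Submodule.finrank_add_eq_of_isCompl hcompl
  have := Submodule.finrank_add_finrank_le_of_disjoint
    (disjoint_iSup_ker_add hgr.submodule_iSupIndep h₀ h₁ hWℱ hWker)
  omega

end Rank

theorem stmt1 {K V : Type*} [Field K] [AddCommGroup V] [Module K V]
    [FiniteDimensional K V]
    (ℱ : ℤ → Submodule K V) (hgr : DirectSum.IsInternal ℱ)
    (d₀ d₁ : V →ₗ[K] V)
    (h0 : ∀ (n : ℤ), ∀ x ∈ ℱ n, d₀ x ∈ ℱ n)
    (h1 : ∀ (n : ℤ), ∀ x ∈ ℱ n, d₁ x ∈ ℱ (n - 2))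
    (hd : (d₀ + d₁) ∘ₗ (d₀ + d₁) = 0) :
    d₀ ∘ₗ d₀ = 0 ∧
    Module.finrank K
        (LinearMap.ker (d₀ + d₁) ⧸
          (LinearMap.range (d₀ + d₁)).comap (LinearMap.ker (d₀ + d₁)).subtype) ≤
      Module.finrank K
        (LinearMap.ker d₀ ⧸ (LinearMap.range d₀).comap (LinearMap.ker d₀).subtype) := by
  have h₀ : PreservesGrading ℱ d₀ := h0
  have h₁ : LowersGrading ℱ d₁ := fun n x hx => le_gradedBelow (by omega) (h1 n x hx)
  have hd₀ : d₀ ∘ₗ d₀ = 0 := h₀.comp_self_eq_zero hgr h₁ hd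
  refine ⟨hd₀, ?_⟩
  have := finrank_homology_add_finrank hd
  have := finrank_homology_add_finrank hd₀
  have := finrank_ker_add_le_finrank_ker hgr h₀ h₁
  omega
end

section
/- Let V be the free Z-module on {v₊, v₋} and W the free Z-module on {w₊, w₋, w₊′, w₋′}. Fix integers A, B, C, D. Define m : W ⊗ V → W by m(w ⊗ v₊) = w for all w, m(w₊ ⊗ v₋) = w₋, m(w₋ ⊗ v₋) = 0, m(w₊′ ⊗ v₋) = A·w₋ + w₋′, m(w₋′ ⊗ v₋) = B·w₊. Define σ_W : W → W by σ_W(w₊) = 2w₋, σ_W(w₋) = 0, σ_W(w₊′) = (A+C)w₋ + 2w₋′, σ_W(w₋′) = (B+D)w₊, and σ_V : V → V by σ_V(v₊) = 2v₋, σ_V(v₋) = 0. If m ∘ (σ_W ⊗ id_V) = m ∘ (id_W ⊗ σ_V) and m ∘ (σ_W ⊗ id_V) = σ_W ∘ m as maps W ⊗ V → W, then A = C and B = D = 0. -/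
/-!
Evaluating `m ∘ (σ_W ⊗ id) = m ∘ (id ⊗ σ_V)` on `w₊′ ⊗ v₊`, `w₊′ ⊗ v₋` and `w₋′ ⊗ v₋` gives
`(A + C) w₋ + 2 w₋′ = 2 (A w₋ + w₋′)`, `2B w₊ = 0` and `(B + D) w₋ = 0`; comparing coefficients
yields `A = C`, `B = 0` and `D = 0`.
-/

open TensorProduct

abbrev Vmod : Type := ℤ × ℤ
def vp : Vmod := (1, 0)
def vm : Vmod := (0, 1)

abbrev Wmod : Type := Fin 4 → ℤ
def wp : Wmod := Pi.single 0 1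
def wm : Wmod := Pi.single 1 1
def wp' : Wmod := Pi.single 2 1
def wm' : Wmod := Pi.single 3 1

section

variable {P : Type*} [AddCommGroup P] (m : Wmod ⊗[ℤ] Vmod →ₗ[ℤ] P) (r : ℤ) (w : Wmod) (v : Vmod)

/- The tensor product is formed with `AddCommGroup.toIntModule`, while `r • w` and `r • v` use the
pointwise actions on `Fin 4 → ℤ` and `ℤ × ℤ`; the two agree only up to unfolding, so `smul_tmul'`
and `tmul_smul` do not fire under `simp` and these rewrites stand in for them. -/
lemma map_smul_tmul : m ((r • w) ⊗ₜ v) = r • m (w ⊗ₜ v) :=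
  map_smul m r (w ⊗ₜ v)

lemma map_tmul_smul : m (w ⊗ₜ (r • v)) = r • m (w ⊗ₜ v) := by
  rw [← map_smul, tmul_smul]

end

theorem stmt7_general (A B C D : ℤ)
    (m : Wmod ⊗[ℤ] Vmod →ₗ[ℤ] Wmod)
    (σW : Wmod →ₗ[ℤ] Wmod) (σV : Vmod →ₗ[ℤ] Vmod)
    (hm1 : ∀ w : Wmod, m (w ⊗ₜ vp) = w)
    (hm2 : m (wp ⊗ₜ vm) = wm)
    (hm3 : m (wm ⊗ₜ vm) = 0)
    (hm4 : m (wp' ⊗ₜ vm) = A • wm + wm')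
    (hm5 : m (wm' ⊗ₜ vm) = B • wp)
    (hσ3 : σW wp' = (A + C) • wm + (2 : ℤ) • wm')
    (hσ4 : σW wm' = (B + D) • wp)
    (hσV1 : σV vp = (2 : ℤ) • vm)
    (hσV2 : σV vm = 0)
    (hc1 : m ∘ₗ TensorProduct.map σW LinearMap.id
            = m ∘ₗ TensorProduct.map LinearMap.id σV) :
    A = C ∧ B = 0 ∧ D = 0 := by
  have hσ (w : Wmod) (v : Vmod) : m (σW w ⊗ₜ v) = m (w ⊗ₜ σV v) :=
    LinearMap.congr_fun hc1 (w ⊗ₜ v)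
  have h₁ := hσ wp' vp
  have h₂ := hσ wp' vm
  have h₃ := hσ wm' vm
  simp only [hσ3, hσ4, hσV1, hσV2, add_tmul, tmul_zero, map_add, map_zero, map_smul_tmul,
    map_tmul_smul, hm1, hm2, hm3, hm4, hm5, smul_zero, zero_add] at h₁ h₂ h₃
  have hAC : A + C = 2 * A := by simpa [wm, wm'] using congrFun h₁ 1
  have hB : 2 * B = 0 := by simpa [wp] using congrFun h₂ 0
  have hBD : B + D = 0 := by simpa [wm] using congrFun h₃ 1
  omega

theorem stmt7 (A B C D : ℤ)
    (m : Wmod ⊗[ℤ] Vmod →ₗ[ℤ] Wmod)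
    (σW : Wmod →ₗ[ℤ] Wmod) (σV : Vmod →ₗ[ℤ] Vmod)
    (hm1 : ∀ w : Wmod, m (w ⊗ₜ vp) = w)
    (hm2 : m (wp ⊗ₜ vm) = wm)
    (hm3 : m (wm ⊗ₜ vm) = 0)
    (hm4 : m (wp' ⊗ₜ vm) = A • wm + wm')
    (hm5 : m (wm' ⊗ₜ vm) = B • wp)
    (hσ1 : σW wp = (2 : ℤ) • wm)
    (hσ2 : σW wm = 0)
    (hσ3 : σW wp' = (A + C) • wm + (2 : ℤ) • wm')
    (hσ4 : σW wm' = (B + D) • wp)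
    (hσV1 : σV vp = (2 : ℤ) • vm)
    (hσV2 : σV vm = 0)
    (hc1 : m ∘ₗ TensorProduct.map σW LinearMap.id
            = m ∘ₗ TensorProduct.map LinearMap.id σV)
    (hc2 : m ∘ₗ TensorProduct.map σW LinearMap.id = σW ∘ₗ m) :
    A = C ∧ B = 0 ∧ D = 0 :=
  stmt7_general A B C D m σW σV hm1 hm2 hm3 hm4 hm5 hσ3 hσ4 hσV1 hσV2 hc1
end
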